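/- Let $f = \sum_{(\sigma,i) \in \mathbf{B}} c(\sigma,i) \cdot \frac{1}{\lambda(A(\sigma,i))} \cdot e(\sigma,i) \cdot \chi_{A(\sigma,i)}$ be a basic function with values in $\ell_2$. Then $f$ is Pettis integrable if and only if $\sum_{(\sigma,i) \in \mathbf{B}} c(\sigma,i)^2 < \infty$, and in that case $\|\int_{[0,1]} f\| = \sqrt{\sum_{(\sigma,i) \in \mathbf{B}} c(\sigma,i)^2}$. -/

import Mathlib

open MeasureTheory
open scoped Classical

noncomputable section

/-- The Hilbert space `ℓ₂` of square-summable real sequences. -/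
abbrev H2 : Type := lp (fun _ : ℕ => ℝ) 2

/-- The index set `B = {(σ,i) : σ ∈ {0,1}^{<∞}, 0 ≤ i ≤ |σ|}`. -/
def Bidx : Type := Σ σ : List Bool, Fin (σ.length + 1)

/-- Left endpoint of the dyadic interval `I_σ`. -/
noncomputable def dyadicLeft (σ : List Bool) : ℝ :=
  ∑ i ∈ Finset.range σ.length, if σ.getD i false then (2:ℝ)⁻¹ ^ (i+1) else 0

/-- The dyadic interval `I_σ ⊆ [0,1]` of length `2^{-|σ|}`: `I_∅ = [0,1]`,
`I_{σ0}` is the left half and `I_{σ1}` the right half of `I_σ`. -/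
noncomputable def dyadicInterval (σ : List Bool) : Set ℝ :=
  Set.Icc (dyadicLeft σ) (dyadicLeft σ + (2:ℝ)⁻¹ ^ σ.length)

/-- `f` is Pettis integrable with respect to `μ`: every continuous functional composed with
`f` is integrable, and over each measurable set there is a vector representing the integrals. -/
def PettisIntegrable {X : Type} [NormedAddCommGroup X] [NormedSpace ℝ X]
    (f : ℝ → X) (μ : MeasureTheory.Measure ℝ) : Prop :=
  (∀ φ : X →L[ℝ] ℝ, MeasureTheory.Integrable (fun t => φ (f t)) μ) ∧
  ∀ E : Set ℝ, MeasurableSet E → ∃ v : X, ∀ φ : X →L[ℝ] ℝ, φ v = ∫ t in E, φ (f t) ∂μ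

/-- `v` is the Pettis integral of `f` over the set `E` (w.r.t. `μ`). -/
def IsPettisIntegralOn {X : Type} [NormedAddCommGroup X] [NormedSpace ℝ X]
    (f : ℝ → X) (μ : MeasureTheory.Measure ℝ) (E : Set ℝ) (v : X) : Prop :=
  ∀ φ : X →L[ℝ] ℝ, φ v = ∫ t in E, φ (f t) ∂μ

/-- The basic function `f = ∑_{(σ,i) ∈ B} c(σ,i) (1/λ(A(σ,i))) e(σ,i) χ_{A(σ,i)}`. -/
noncomputable def basicFun {X : Type} [NormedAddCommGroup X] [NormedSpace ℝ X]
    (c : Bidx → ℝ) (A : Bidx → Set ℝ) (e : Bidx → X) : ℝ → X :=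
  fun t => ∑' p : Bidx,
    Set.indicator (A p) (fun _ => ((MeasureTheory.volume (A p)).toReal)⁻¹ • (c p • e p)) t

/-- The restriction `f_{|τ}`: the subseries of the basic function over indices `(σ,i)`
with `σ` an extension of `τ`. -/
noncomputable def basicFunRes {X : Type} [NormedAddCommGroup X] [NormedSpace ℝ X]
    (τ : List Bool) (c : Bidx → ℝ) (A : Bidx → Set ℝ) (e : Bidx → X) : ℝ → X :=
  basicFun (fun p => if τ <+: p.1 then c p else 0) A e

/-! On `A p` the basic function is the constant `c p • e p / λ(A p)`, so for a functional `φ`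
the integral of `φ ∘ f` over `E` is `∑ p, (λ(E ∩ A p) / λ(A p)) c p φ(e p)`. Writing `φ` as an
inner product, Bessel's inequality makes this series absolutely convergent once `∑ c p ^ 2 < ∞`,
and the vector `∑ p, (λ(E ∩ A p) / λ(A p)) c p • e p`, whose coefficients are dominated by `c`,
is the Pettis integral over `E`. Conversely, testing a Pettis integral over `[0,1]` against
`⟪e q, ·⟫` shows that its coordinates are the `c q`, so Bessel's inequality forces
`∑ c p ^ 2 < ∞`; testing against all functionals identifies it with `∑ p, c p • e p`, whose norm
is `√(∑ c p ^ 2)`. -/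

open Set Function
open scoped ENNReal RealInnerProductSpace

instance : Countable Bidx := by unfold Bidx; infer_instance

lemma dyadicLeft_le (σ : List Bool) : dyadicLeft σ ≤ 1 - (2:ℝ)⁻¹ ^ σ.length := by
  have geom : ∀ n, ∑ i ∈ Finset.range n, (2:ℝ)⁻¹ ^ (i + 1) = 1 - (2:ℝ)⁻¹ ^ n := by
    intro n
    induction n with
    | zero => simp
    | succ n ih => rw [Finset.sum_range_succ, ih]; ring
  rw [← geom]
  refine Finset.sum_le_sum fun i _ => ?_
  split_ifs <;> [exact le_rfl; positivity]

lemma dyadicInterval_subset_Icc (σ : List Bool) : dyadicInterval σ ⊆ Icc 0 1 := by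
  have hL : 0 ≤ dyadicLeft σ := Finset.sum_nonneg fun i _ => by split_ifs <;> positivity
  have := dyadicLeft_le σ
  exact Icc_subset_Icc hL (by linarith)

section basicFun

variable {X Y : Type} [NormedAddCommGroup X] [NormedSpace ℝ X] [NormedAddCommGroup Y]
  [NormedSpace ℝ Y] {A : Bidx → Set ℝ} {c : Bidx → ℝ} {e : Bidx → X}

lemma basicFun_apply_of_mem (hdisj : Pairwise (Disjoint on A)) {t : ℝ} {p : Bidx}
    (ht : t ∈ A p) : basicFun c A e t = (volume.real (A p))⁻¹ • c p • e p := by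
  rw [basicFun, tsum_eq_single p fun q hq =>
    indicator_of_notMem (fun htq => disjoint_left.mp (hdisj hq) htq ht) _,
    indicator_of_mem ht]
  rfl

lemma basicFun_apply_of_notMem {t : ℝ} (ht : t ∉ ⋃ p, A p) : basicFun c A e t = 0 := by
  rw [mem_iUnion, not_exists] at ht
  simp [basicFun, indicator_of_notMem (ht _)]

lemma map_basicFun {F : Type} [FunLike F X Y] [LinearMapClass F ℝ X Y] (φ : F)
    (hdisj : Pairwise (Disjoint on A)) (t : ℝ) :
    φ (basicFun c A e t) = basicFun c A (fun p => φ (e p)) t := by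
  by_cases ht : t ∈ ⋃ p, A p
  · obtain ⟨p, hp⟩ := mem_iUnion.mp ht
    simp only [basicFun_apply_of_mem hdisj hp, map_smul]
  · simp only [basicFun_apply_of_notMem ht, map_zero]

lemma integrable_basicFun (hA : ∀ p, MeasurableSet (A p)) (hfin : ∀ p, volume (A p) ≠ ∞)
    (hpos : ∀ p, 0 < volume (A p)) (hdisj : Pairwise (Disjoint on A))
    (hs : Summable fun p => ‖c p • e p‖) : Integrable (basicFun c A e) := by
  have hconst :
      ∀ p, EqOn (basicFun c A e) (fun _ => (volume.real (A p))⁻¹ • c p • e p) (A p) :=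
    fun p t ht => basicFun_apply_of_mem hdisj ht
  have hnorm : ∀ p, ∫ t in A p, ‖basicFun c A e t‖ = ‖c p • e p‖ := by
    intro p
    have hreal : 0 < volume.real (A p) := ENNReal.toReal_pos (hpos p).ne' (hfin p)
    rw [setIntegral_congr_fun (hA p) fun t ht => congrArg norm (hconst p ht), setIntegral_const,
      norm_smul, Real.norm_of_nonneg (inv_nonneg.mpr hreal.le), smul_eq_mul,
      mul_inv_cancel_left₀ hreal.ne']
  refine IntegrableOn.integrable_of_forall_notMem_eq_zero ?_
    fun t ht => basicFun_apply_of_notMem ht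
  refine integrableOn_iUnion_of_summable_integral_norm (fun p => ?_) (by simpa only [hnorm])
  exact (integrableOn_const (hfin p)).congr_fun (hconst p).symm (hA p)

lemma hasSum_integral_basicFun [CompleteSpace X] (hA : ∀ p, MeasurableSet (A p))
    (hdisj : Pairwise (Disjoint on A)) {ν : Measure ℝ} (hint : Integrable (basicFun c A e) ν) :
    HasSum (fun p => ν.real (A p) • (volume.real (A p))⁻¹ • c p • e p)
      (∫ t, basicFun c A e t ∂ν) := by
  rw [← setIntegral_eq_integral_of_forall_compl_eq_zero fun t ht => basicFun_apply_of_notMem ht]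
  convert hasSum_integral_iUnion hA hdisj hint.integrableOn using 2 with p
  rw [setIntegral_congr_fun (hA p) fun t ht => basicFun_apply_of_mem hdisj ht, setIntegral_const]

lemma hasSum_setIntegral_apply_basicFun (hA : ∀ p, MeasurableSet (A p))
    (hdisj : Pairwise (Disjoint on A)) {μ : Measure ℝ} (E : Set ℝ) (φ : X →L[ℝ] ℝ)
    (hint : Integrable (fun t => φ (basicFun c A e t)) μ) :
    HasSum (fun p => (μ.restrict E).real (A p) / volume.real (A p) * (c p * φ (e p)))
      (∫ t in E, φ (basicFun c A e t) ∂μ) := by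
  simp_rw [map_basicFun φ hdisj] at hint ⊢
  refine (hasSum_integral_basicFun hA hdisj hint.restrict).congr_fun fun p => ?_
  simp only [smul_eq_mul]
  ring

lemma hasSum_apply_of_isPettisIntegralOn {S : Set ℝ} (hA : ∀ p, MeasurableSet (A p))
    (hsub : ∀ p, A p ⊆ S) (hfin : ∀ p, volume (A p) ≠ ∞) (hpos : ∀ p, 0 < volume (A p))
    (hdisj : Pairwise (Disjoint on A))
    (hint : ∀ φ : X →L[ℝ] ℝ, Integrable (fun t => φ (basicFun c A e t)) (volume.restrict S))
    {v : X} (hv : IsPettisIntegralOn (basicFun c A e) (volume.restrict S) S v)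
    (φ : X →L[ℝ] ℝ) : HasSum (fun p => c p * φ (e p)) (φ v) := by
  rw [hv φ]
  refine (hasSum_setIntegral_apply_basicFun hA hdisj S φ (hint φ)).congr_fun fun p => ?_
  have hS : ((volume.restrict S).restrict S).real (A p) = volume.real (A p) := by
    simp only [measureReal_def, Measure.restrict_eq_self _ (hsub p)]
  have hreal : 0 < volume.real (A p) := ENNReal.toReal_pos (hpos p).ne' (hfin p)
  rw [hS, div_self hreal.ne', one_mul]

end basicFun

namespace Orthonormal

variable {ι X : Type*} [NormedAddCommGroup X] [InnerProductSpace ℝ X] {e : ι → X} {c : ι → ℝ}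

lemma summable_sq_apply [CompleteSpace X] (he : Orthonormal ℝ e) (φ : X →L[ℝ] ℝ) :
    Summable fun i => φ (e i) ^ 2 := by
  obtain ⟨y, rfl⟩ := (InnerProductSpace.toDual ℝ X).surjective φ
  simpa [real_inner_comm] using he.inner_products_summable (x := y)

lemma summable_abs_mul_apply [CompleteSpace X] (he : Orthonormal ℝ e)
    (hc : Summable fun i => c i ^ 2) (φ : X →L[ℝ] ℝ) : Summable fun i => |c i * φ (e i)| := by
  refine .of_nonneg_of_le (fun i => abs_nonneg _) (fun i => ?_)
    ((hc.add (he.summable_sq_apply φ)).div_const 2)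
  rw [abs_mul, ← sq_abs (c i), ← sq_abs (φ (e i))]
  linarith [two_mul_le_add_sq |c i| |φ (e i)|]

lemma summable_smul [CompleteSpace X] (he : Orthonormal ℝ e) (hc : Summable fun i => c i ^ 2) :
    Summable fun i => c i • e i := by
  simpa [LinearIsometry.toSpanSingleton_apply] using
    (he.orthogonalFamily.summable_iff_norm_sq_summable c).2 (by simpa using hc)

lemma hasSum_apply_tsum_smul [CompleteSpace X] (he : Orthonormal ℝ e)
    (hc : Summable fun i => c i ^ 2) (φ : X →L[ℝ] ℝ) :
    HasSum (fun i => c i * φ (e i)) (φ (∑' i, c i • e i)) := by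
  simpa using (he.summable_smul hc).hasSum.mapL φ

lemma hasSum_sq_of_hasSum_smul (he : Orthonormal ℝ e) {w : X}
    (hw : HasSum (fun i => c i • e i) w) : HasSum (fun i => c i ^ 2) (‖w‖ ^ 2) := by
  refine ((continuous_norm.tendsto w).comp hw |>.pow 2).congr fun s => ?_
  simpa [LinearIsometry.toSpanSingleton_apply] using he.orthogonalFamily.norm_sum c s

lemma hasSum_mul_inner (he : Orthonormal ℝ e) (j : ι) :
    HasSum (fun i => c i * ⟪e j, e i⟫) (c j) := by
  have h := hasSum_single (f := fun i => c i * ⟪e j, e i⟫) j fun i hi => by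
    simp only [he.inner_eq_zero hi.symm, mul_zero]
  rwa [real_inner_self_eq_norm_sq, he.norm_eq_one, one_pow, mul_one] at h

end Orthonormal

section Pettis

variable {X : Type} [NormedAddCommGroup X] [InnerProductSpace ℝ X]
  {A : Bidx → Set ℝ} {c : Bidx → ℝ} {e : Bidx → X} {S : Set ℝ}

lemma integrable_apply_basicFun [CompleteSpace X] (hA : ∀ p, MeasurableSet (A p))
    (hfin : ∀ p, volume (A p) ≠ ∞) (hpos : ∀ p, 0 < volume (A p))
    (hdisj : Pairwise (Disjoint on A)) (he : Orthonormal ℝ e)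
    (hc : Summable fun p => c p ^ 2) (φ : X →L[ℝ] ℝ) :
    Integrable fun t => φ (basicFun c A e t) := by
  simp_rw [map_basicFun φ hdisj]
  refine integrable_basicFun hA hfin hpos hdisj ?_
  simpa [abs_mul] using he.summable_abs_mul_apply hc φ

lemma summable_sq_of_pettisIntegrable (hS : MeasurableSet S) (hA : ∀ p, MeasurableSet (A p))
    (hsub : ∀ p, A p ⊆ S) (hfin : ∀ p, volume (A p) ≠ ∞) (hpos : ∀ p, 0 < volume (A p))
    (hdisj : Pairwise (Disjoint on A)) (he : Orthonormal ℝ e)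
    (h : PettisIntegrable (basicFun c A e) (volume.restrict S)) :
    Summable fun p => c p ^ 2 := by
  obtain ⟨v, hv⟩ := h.2 S hS
  have hcoord : ∀ q, ⟪e q, v⟫ = c q := fun q =>
    (hasSum_apply_of_isPettisIntegralOn hA hsub hfin hpos hdisj h.1 hv (innerSL ℝ (e q))).unique
      (he.hasSum_mul_inner q)
  simpa [hcoord] using he.inner_products_summable (x := v)

lemma pettisIntegrable_basicFun [CompleteSpace X] (hA : ∀ p, MeasurableSet (A p))
    (hfin : ∀ p, volume (A p) ≠ ∞) (hpos : ∀ p, 0 < volume (A p))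
    (hdisj : Pairwise (Disjoint on A)) (he : Orthonormal ℝ e)
    (hc : Summable fun p => c p ^ 2) :
    PettisIntegrable (basicFun c A e) (volume.restrict S) := by
  have hint φ := (integrable_apply_basicFun hA hfin hpos hdisj he hc φ).restrict (s := S)
  refine ⟨hint, fun E _ => ?_⟩
  set r : Bidx → ℝ := fun p => ((volume.restrict S).restrict E).real (A p) / volume.real (A p)
  have hr : ∀ p, r p ^ 2 ≤ 1 := fun p => by
    refine pow_le_one₀ (by positivity) (div_le_one_of_le₀ ?_ ENNReal.toReal_nonneg)
    exact ENNReal.toReal_mono (hfin p)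
      ((Measure.restrict_apply_le _ _).trans (Measure.restrict_apply_le _ _))
  have hd : Summable fun p => (r p * c p) ^ 2 :=
    hc.of_nonneg_of_le (fun p => sq_nonneg _) fun p => by
      rw [mul_pow]; exact mul_le_of_le_one_left (sq_nonneg _) (hr p)
  refine ⟨∑' p, (r p * c p) • e p, fun φ => (he.hasSum_apply_tsum_smul hd φ).unique ?_⟩
  exact (hasSum_setIntegral_apply_basicFun hA hdisj E φ (hint φ)).congr_fun fun p => by ring

lemma norm_eq_sqrt_tsum_of_isPettisIntegralOn [CompleteSpace X] (hA : ∀ p, MeasurableSet (A p))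
    (hsub : ∀ p, A p ⊆ S) (hfin : ∀ p, volume (A p) ≠ ∞) (hpos : ∀ p, 0 < volume (A p))
    (hdisj : Pairwise (Disjoint on A)) (he : Orthonormal ℝ e) (hc : Summable fun p => c p ^ 2)
    {v : X} (hv : IsPettisIntegralOn (basicFun c A e) (volume.restrict S) S v) :
    ‖v‖ = √(∑' p, c p ^ 2) := by
  have hint φ := (integrable_apply_basicFun hA hfin hpos hdisj he hc φ).restrict (s := S)
  have hvw : v = ∑' p, c p • e p := ext_inner_left ℝ fun u =>
    (hasSum_apply_of_isPettisIntegralOn hA hsub hfin hpos hdisj hint hv (innerSL ℝ u)).unique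
      (he.hasSum_apply_tsum_smul hc (innerSL ℝ u))
  rw [(he.hasSum_sq_of_hasSum_smul (hvw ▸ (he.summable_smul hc).hasSum)).tsum_eq,
    Real.sqrt_sq (norm_nonneg v)]

end Pettis

/-- Lemma 3.1(1): a basic function with values in `ℓ₂` is Pettis integrable iff
`∑ c(σ,i)² < ∞`, in which case the norm of its integral over `[0,1]` is
`√(∑ c(σ,i)²)`. -/
theorem stmt5 (A : Bidx → Set ℝ) (hAc : ∀ p, IsClosed (A p))
    (hAs : ∀ p : Bidx, A p ⊆ dyadicInterval p.1)
    (hApos : ∀ p, 0 < volume (A p))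
    (hdisj : ∀ p q : Bidx, p ≠ q → Disjoint (A p) (A q))
    (e : Bidx → H2) (he : Orthonormal ℝ e) (c : Bidx → ℝ) :
    (PettisIntegrable (basicFun c A e) (volume.restrict (Set.Icc 0 1)) ↔
      Summable (fun p : Bidx => c p ^ 2)) ∧
    (Summable (fun p : Bidx => c p ^ 2) → ∀ v : H2,
      IsPettisIntegralOn (basicFun c A e) (volume.restrict (Set.Icc 0 1)) (Set.Icc 0 1) v →
      ‖v‖ = Real.sqrt (∑' p : Bidx, c p ^ 2)) := by
  have hA p := (hAc p).measurableSet
  have hsub p : A p ⊆ Icc 0 1 := (hAs p).trans (dyadicInterval_subset_Icc _)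
  have hfin p : volume (A p) ≠ ∞ := measure_ne_top_of_subset (hsub p) measure_Icc_lt_top.ne
  exact ⟨⟨summable_sq_of_pettisIntegrable measurableSet_Icc hA hsub hfin hApos hdisj he,
    pettisIntegrable_basicFun hA hfin hApos hdisj he⟩,
    fun hc _ => norm_eq_sqrt_tsum_of_isPettisIntegralOn hA hsub hfin hApos hdisj he hc⟩
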